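/- For the q-sequence x_0 = 1, x_{k+1} = x_k + x_k^{1-q} with real q > 1, one has x_k^q / (q k) → 1 as k → ∞. -/

import Mathlib

/-!
Since `x (k+1) = x k * (1 + x k ^ (-q))`, the increment of `y k = x k ^ q` is the difference
quotient `((1 + t) ^ q - 1) / t` at `t = (y k)⁻¹`. Bernoulli's inequality bounds it below by `q`,
so `y k → ∞` and `t → 0`, where the difference quotient tends to the derivative `q` of
`(1 + t) ^ q` at `0`. Cesàro averaging of the increments then gives `y k / k → q`.
-/

open Filter Topology

theorem Real.tendsto_one_add_rpow_sub_one_div (q : ℝ) :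
    Tendsto (fun t : ℝ => ((1 + t) ^ q - 1) / t) (𝓝[≠] 0) (𝓝 q) := by
  have h : HasDerivAt (fun t : ℝ => (1 + t) ^ q) q 0 := by
    simpa using ((hasDerivAt_id (0 : ℝ)).const_add 1).rpow_const (p := q) (Or.inl (by norm_num))
  rw [hasDerivAt_iff_tendsto_slope] at h
  refine h.congr fun t => ?_
  simp [slope_def_field]

theorem Real.le_one_add_rpow_sub_one_div {q t : ℝ} (hq : 1 ≤ q) (ht : 0 < t) :
    q ≤ ((1 + t) ^ q - 1) / t := by
  rw [le_div_iff₀ ht]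
  linarith [one_add_mul_self_le_rpow_one_add (by linarith : -1 ≤ t) hq]

theorem tendsto_div_natCast_of_tendsto_sub {a : ℕ → ℝ} {l : ℝ}
    (h : Tendsto (fun k => a (k + 1) - a k) atTop (𝓝 l)) :
    Tendsto (fun k => a k / k) atTop (𝓝 l) := by
  have hmean : Tendsto (fun k : ℕ => (k : ℝ)⁻¹ * (a k - a 0) + a 0 / k) atTop (𝓝 (l + 0)) := by
    refine (h.cesaro.congr fun k => ?_).add (tendsto_const_div_atTop_nhds_zero_nat (a 0))
    rw [Finset.sum_range_sub]
  rw [add_zero] at hmean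
  refine hmean.congr fun k => ?_
  ring

def IsQSequence (q : ℝ) (x : ℕ → ℝ) : Prop :=
  ∀ k, x (k + 1) = x k + x k ^ (1 - q)

namespace IsQSequence

variable {q : ℝ} {x : ℕ → ℝ}

theorem pos (hx : IsQSequence q x) (h0 : 0 < x 0) (k : ℕ) : 0 < x k := by
  induction k with
  | zero => exact h0
  | succ k ih =>
    rw [hx]
    have := Real.rpow_pos_of_pos ih (1 - q)
    linarith

theorem rpow_succ_sub_rpow_eq (hx : IsQSequence q x) {k : ℕ} (hk : 0 < x k) :
    x (k + 1) ^ q - x k ^ q = ((1 + (x k ^ q)⁻¹) ^ q - 1) / (x k ^ q)⁻¹ := by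
  have hstep : x (k + 1) = x k * (1 + (x k ^ q)⁻¹) := by
    rw [hx, ← Real.rpow_neg hk.le, sub_eq_add_neg, Real.rpow_add hk, Real.rpow_one]
    ring
  rw [hstep, Real.mul_rpow hk.le (by positivity)]
  field_simp

theorem le_rpow_succ_sub_rpow (hx : IsQSequence q x) (hq : 1 ≤ q) {k : ℕ} (hk : 0 < x k) :
    q ≤ x (k + 1) ^ q - x k ^ q := by
  rw [hx.rpow_succ_sub_rpow_eq hk]
  exact Real.le_one_add_rpow_sub_one_div hq (by positivity)

theorem tendsto_rpow_atTop (hx : IsQSequence q x) (hq : 1 ≤ q) (h0 : 0 < x 0) :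
    Tendsto (fun k => x k ^ q) atTop atTop := by
  have hlin : ∀ k : ℕ, x 0 ^ q + q * k ≤ x k ^ q := by
    intro k
    induction k with
    | zero => simp
    | succ k ih =>
      have := hx.le_rpow_succ_sub_rpow hq (hx.pos h0 k)
      push_cast
      linarith
  refine tendsto_atTop_mono hlin (tendsto_atTop_add_const_left _ _ ?_)
  exact tendsto_natCast_atTop_atTop.const_mul_atTop (by linarith)

theorem tendsto_rpow_succ_sub_rpow (hx : IsQSequence q x) (hq : 1 ≤ q) (h0 : 0 < x 0) :
    Tendsto (fun k => x (k + 1) ^ q - x k ^ q) atTop (𝓝 q) := by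
  have hinv : Tendsto (fun k => (x k ^ q)⁻¹) atTop (𝓝[≠] 0) :=
    (tendsto_inv_atTop_nhdsGT_zero.comp (hx.tendsto_rpow_atTop hq h0)).mono_right
      (nhdsWithin_mono _ fun _ ht => ne_of_gt ht)
  refine ((Real.tendsto_one_add_rpow_sub_one_div q).comp hinv).congr fun k => ?_
  exact (hx.rpow_succ_sub_rpow_eq (hx.pos h0 k)).symm

theorem tendsto_rpow_div_natCast (hx : IsQSequence q x) (hq : 1 ≤ q) (h0 : 0 < x 0) :
    Tendsto (fun k => x k ^ q / k) atTop (𝓝 q) :=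
  tendsto_div_natCast_of_tendsto_sub (hx.tendsto_rpow_succ_sub_rpow hq h0)

end IsQSequence

theorem stmt_16 (q : ℝ) (hq : 1 < q) (x : ℕ → ℝ)
    (h0 : x 0 = 1)
    (hrec : ∀ k, x (k + 1) = x k + x k ^ (1 - q)) :
    Tendsto (fun k : ℕ => x k ^ q / (q * (k : ℝ))) atTop (nhds 1) := by
  have hx : IsQSequence q x := hrec
  have h := (hx.tendsto_rpow_div_natCast hq.le (by rw [h0]; exact one_pos)).div_const q
  rw [div_self (by positivity : q ≠ 0)] at h
  refine h.congr fun k => ?_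
  rw [div_div, mul_comm]
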